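/- arXiv:1409.8007 — 2 statements merged into one kernel-verified Lean document; each statement's English description precedes it below -/
import Mathlib

section
/- Let X be a metric space, G a topological group acting continuously by isometries on X, and for a closed subgroup H ≤ G let 𝒞_H(x) denote the closed convex hull of the orbit H·x. Then for any x, y ∈ X, the map H ↦ d(y, 𝒞_H(x)) from the Chabauty space 𝒮(G) of closed subgroups of G to ℝ is upper semicontinuous; in particular it is Borel measurable. -/
open Metric Set Filter Topology MeasureTheory
open scoped ENNReal

class Midpoints (X : Type*) [MetricSpace X] where
  mid : X → X → X
  dist_left : ∀ x y : X, dist x (mid x y) = dist x y / 2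
  dist_right : ∀ x y : X, dist y (mid x y) = dist x y / 2
  mid_lipschitz : ∀ x y x' y' : X, dist (mid x y) (mid x' y') ≤ (dist x x' + dist y y') / 2

variable {X : Type*} [MetricSpace X] [Midpoints X]

def MConvex (C : Set X) : Prop := ∀ x ∈ C, ∀ y ∈ C, Midpoints.mid x y ∈ C

def cchull (A : Set X) : Set X := ⋂₀ {C : Set X | A ⊆ C ∧ IsClosed C ∧ MConvex C}

def orbitHull (H : Subgroup (X ≃ᵢ X)) (x : X) : Set X :=
  cchull {y : X | ∃ h ∈ H, h x = y}

def IsInvariantSet (H : Subgroup (X ≃ᵢ X)) (C : Set X) : Prop :=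
  ∀ h ∈ H, ∀ x ∈ C, h x ∈ C

def IsCCI (H : Subgroup (X ≃ᵢ X)) (C : Set X) : Prop :=
  C.Nonempty ∧ IsClosed C ∧ MConvex C ∧ IsInvariantSet H C

def IsMinimalCCI (H : Subgroup (X ≃ᵢ X)) (C : Set X) : Prop :=
  IsCCI H C ∧ ∀ D : Set X, IsCCI H D → D ⊆ C → D = C

noncomputable def phi (H : Subgroup (X ≃ᵢ X)) (x : X) : ℝ≥0∞ :=
  ⨆ y ∈ orbitHull H x, EMetric.infEdist x (orbitHull H y)

def MinimalAction (H : Subgroup (X ≃ᵢ X)) : Prop := ∀ C : Set X, IsCCI H C → C = univ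

def GeodesicRay {Y : Type*} [MetricSpace Y] (γ : ℝ → Y) : Prop :=
  ∀ s t : ℝ, 0 ≤ s → 0 ≤ t → dist (γ s) (γ t) = |s - t|

noncomputable def busemann {Y : Type*} [MetricSpace Y] (γ : ℝ → Y) (x : Y) : ℝ :=
  limUnder atTop (fun t : ℝ => dist x (γ t) - t)

def FixesAtInfinity (H : Subgroup (X ≃ᵢ X)) : Prop :=
  ∃ γ : ℝ → X, GeodesicRay γ ∧ ∀ h ∈ H, ∃ c : ℝ, ∀ x : X, busemann γ (h x) = busemann γ x + c

/-- Closed convex hull of the orbit of x under a subgroup H of G acting via ρ. -/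
def orbitHullHom {G : Type*} [Group G] (ρ : G →* (X ≃ᵢ X)) (H : Subgroup G) (x : X) :
    Set X :=
  cchull {y : X | ∃ h ∈ H, ρ h x = y}

/-!
The closed convex hull of `A` is the closure of the union of the iterated midpoint sets
`C^k(A)`. If every point of `B` is a limit of points of `Aₙ`, an induction on `k`, using
continuity of the midpoint map, shows that every point of `C^k(B)` is a limit of points of
`C^k(Aₙ) ⊆ cchull Aₙ`; hence `limsupₙ d(y, cchull Aₙ) ≤ d(y, cchull B)`. For the orbits of
Chabauty-convergent subgroups, the first Chabauty condition together with the continuity of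
the action says exactly that the orbit of `x` under `H` is approximated by the orbits under `Hₙ`.
-/

theorem Midpoints.continuous_mid : Continuous fun p : X × X => Midpoints.mid p.1 p.2 := by
  refine (LipschitzWith.of_dist_le_mul fun p q => ?_).continuous (K := 1)
  calc dist (Midpoints.mid p.1 p.2) (Midpoints.mid q.1 q.2)
      ≤ (dist p.1 q.1 + dist p.2 q.2) / 2 := Midpoints.mid_lipschitz _ _ _ _
    _ ≤ max (dist p.1 q.1) (dist p.2 q.2) := by
      linarith [le_max_left (dist p.1 q.1) (dist p.2 q.2),
        le_max_right (dist p.1 q.1) (dist p.2 q.2)]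
    _ = (1 : NNReal) * dist p q := by rw [NNReal.coe_one, one_mul, Prod.dist_eq]

/-- The paper's `C^k(A)`; keeping `midIter A k` in `midIter A (k + 1)` changes nothing,
as `mid a a = a`. -/
def midIter (A : Set X) : ℕ → Set X
  | 0 => A
  | k + 1 => midIter A k ∪ {z | ∃ a ∈ midIter A k, ∃ b ∈ midIter A k, z = Midpoints.mid a b}

theorem midIter_mono (A : Set X) : Monotone (midIter A) :=
  monotone_nat_of_le_succ fun _ => subset_union_left

theorem MConvex.midIter_subset {A C : Set X} (hC : MConvex C) (hAC : A ⊆ C) :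
    ∀ k, midIter A k ⊆ C
  | 0 => hAC
  | k + 1 => by
    rintro z (hz | ⟨a, ha, b, hb, rfl⟩)
    · exact hC.midIter_subset hAC k hz
    · exact hC a (hC.midIter_subset hAC k ha) b (hC.midIter_subset hAC k hb)

theorem mconvex_iUnion_midIter (A : Set X) : MConvex (⋃ k, midIter A k) := by
  intro a ha b hb
  obtain ⟨j, hj⟩ := mem_iUnion.1 ha
  obtain ⟨k, hk⟩ := mem_iUnion.1 hb
  exact mem_iUnion.2 ⟨max j k + 1, Or.inr ⟨a, midIter_mono A (le_max_left j k) hj,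
    b, midIter_mono A (le_max_right j k) hk, rfl⟩⟩

theorem MConvex.closure {C : Set X} (hC : MConvex C) : MConvex (closure C) := by
  intro a ha b hb
  have hab : (a, b) ∈ _root_.closure (C ×ˢ C) := by rw [closure_prod_eq]; exact ⟨ha, hb⟩
  refine closure_mono ?_ (image_closure_subset_closure_image Midpoints.continuous_mid ⟨_, hab, rfl⟩)
  rintro _ ⟨⟨p, q⟩, ⟨hp, hq⟩, rfl⟩
  exact hC p hp q hq

theorem cchull_eq_closure_iUnion_midIter (A : Set X) :
    cchull A = closure (⋃ k, midIter A k) := by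
  apply Subset.antisymm
  · refine sInter_subset_of_mem ⟨?_, isClosed_closure, (mconvex_iUnion_midIter A).closure⟩
    exact (subset_iUnion (midIter A) 0).trans subset_closure
  · rintro z hz C ⟨hAC, hCc, hCm⟩
    exact hCc.closure_subset_iff.2 (iUnion_subset (hCm.midIter_subset hAC)) hz

theorem midIter_subset_cchull (A : Set X) (k : ℕ) : midIter A k ⊆ cchull A := by
  rw [cchull_eq_closure_iUnion_midIter]
  exact (subset_iUnion (midIter A) k).trans subset_closure

def SeqApproximates {Y : Type*} [TopologicalSpace Y] (A : ℕ → Set Y) (B : Set Y) : Prop :=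
  ∀ z ∈ B, ∃ w : ℕ → Y, (∀ n, w n ∈ A n) ∧ Tendsto w atTop (𝓝 z)

namespace SeqApproximates

theorem mono {Y : Type*} [TopologicalSpace Y] {A A' : ℕ → Set Y} {B : Set Y}
    (h : SeqApproximates A B) (hA : ∀ n, A n ⊆ A' n) : SeqApproximates A' B := fun z hz =>
  let ⟨w, hw, hlim⟩ := h z hz
  ⟨w, fun n => hA n (hw n), hlim⟩

theorem iUnion {Y ι : Type*} [TopologicalSpace Y] {A : ℕ → Set Y} {B : ι → Set Y}
    (h : ∀ i, SeqApproximates A (B i)) : SeqApproximates A (⋃ i, B i) := fun z hz =>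
  let ⟨i, hi⟩ := mem_iUnion.1 hz
  h i z hi

theorem limsup_infEDist_le {Y : Type*} [PseudoEMetricSpace Y] {A : ℕ → Set Y} {B : Set Y}
    (h : SeqApproximates A B) (y : Y) :
    limsup (fun n => infEDist y (A n)) atTop ≤ infEDist y B := by
  refine le_infEDist.2 fun z hz => ?_
  obtain ⟨w, hw, hlim⟩ := h z hz
  calc limsup (fun n => infEDist y (A n)) atTop
      ≤ limsup (fun n => edist y (w n)) atTop :=
        limsup_le_limsup (Eventually.of_forall fun n => infEDist_le_edist_of_mem (hw n))
    _ = edist y z := (tendsto_const_nhds.edist hlim).limsup_eq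

theorem midIter {A : ℕ → Set X} {B : Set X} (h : SeqApproximates A B) :
    ∀ k, SeqApproximates (fun n => midIter (A n) k) (midIter B k)
  | 0 => h
  | k + 1 => by
    rintro z (hz | ⟨a, ha, b, hb, rfl⟩)
    · obtain ⟨w, hw, hlim⟩ := SeqApproximates.midIter h k z hz
      exact ⟨w, fun n => Or.inl (hw n), hlim⟩
    · obtain ⟨wa, hwa, hlima⟩ := SeqApproximates.midIter h k a ha
      obtain ⟨wb, hwb, hlimb⟩ := SeqApproximates.midIter h k b hb
      exact ⟨fun n => Midpoints.mid (wa n) (wb n),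
        fun n => Or.inr ⟨wa n, hwa n, wb n, hwb n, rfl⟩,
        (Midpoints.continuous_mid.tendsto (a, b)).comp (hlima.prodMk_nhds hlimb)⟩

theorem limsup_infEDist_cchull_le {A : ℕ → Set X} {B : Set X} (h : SeqApproximates A B)
    (y : X) : limsup (fun n => infEDist y (cchull (A n))) atTop ≤ infEDist y (cchull B) := by
  have hunion : SeqApproximates (fun n => cchull (A n)) (⋃ k, _root_.midIter B k) :=
    iUnion fun k => (h.midIter k).mono fun n => midIter_subset_cchull (A n) k
  rw [cchull_eq_closure_iUnion_midIter B, infEDist_closure]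
  exact hunion.limsup_infEDist_le y

end SeqApproximates

theorem stmt10_general {G : Type*} [Group G] [TopologicalSpace G]
    (ρ : G →* (X ≃ᵢ X))
    (hcontact : Continuous fun p : G × X => ρ p.1 p.2)
    (Hseq : ℕ → Subgroup G) (H : Subgroup G)
    (hlim₁ : ∀ h ∈ H, ∃ u : ℕ → G, (∀ n, u n ∈ Hseq n) ∧ Tendsto u atTop (nhds h))
    (x y : X) :
    Filter.limsup (fun n => EMetric.infEdist y (orbitHullHom ρ (Hseq n) x)) atTop ≤
      EMetric.infEdist y (orbitHullHom ρ H x) := by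
  have horbit : SeqApproximates (fun n => {z : X | ∃ h ∈ Hseq n, ρ h x = z})
      {z : X | ∃ h ∈ H, ρ h x = z} := by
    rintro _ ⟨h, hh, rfl⟩
    obtain ⟨u, hu, hlim⟩ := hlim₁ h hh
    exact ⟨fun n => ρ (u n) x, fun n => ⟨u n, hu n, rfl⟩,
      (hcontact.tendsto (h, x)).comp (hlim.prodMk_nhds tendsto_const_nhds)⟩
  exact horbit.limsup_infEDist_cchull_le y

/-- The map H ↦ d(y, 𝒞_H(x)) is upper semicontinuous with respect to
Chabauty convergence of closed subgroups: if Hₙ → H in the Chabauty sense, then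
limsupₙ d(y, 𝒞_{Hₙ}(x)) ≤ d(y, 𝒞_H(x)). -/
theorem stmt10 {G : Type*} [Group G] [TopologicalSpace G] [IsTopologicalGroup G]
    (ρ : G →* (X ≃ᵢ X))
    (hcontact : Continuous fun p : G × X => ρ p.1 p.2)
    (Hseq : ℕ → Subgroup G) (H : Subgroup G)
    (hclseq : ∀ n, IsClosed ((Hseq n : Set G))) (hcl : IsClosed ((H : Set G)))
    (hlim₁ : ∀ h ∈ H, ∃ u : ℕ → G, (∀ n, u n ∈ Hseq n) ∧ Tendsto u atTop (nhds h))
    (hlim₂ : ∀ u : ℕ → G, (∀ n, u n ∈ Hseq n) → ∀ g : G, Tendsto u atTop (nhds g) → g ∈ H)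
    (x y : X) :
    Filter.limsup (fun n => EMetric.infEdist y (orbitHullHom ρ (Hseq n) x)) atTop ≤
      EMetric.infEdist y (orbitHullHom ρ H x) :=
  stmt10_general ρ hcontact Hseq H hlim₁ x y
end

section
/- Let X be a complete CAT(0) space. Define iterated midpoint maps m^k: X^{2^k} → X by m¹(x₁,x₂) = midpoint of x₁ and x₂, and m^k(x₁,…,x_{2^k}) = m¹(m^{k−1}(x₁,…,x_{2^{k−1}}), m^{k−1}(x_{2^{k−1}+1},…,x_{2^k})). For any subset A ⊆ X, the closed convex hull of A equals the closure of ⋃_{k∈ℕ} C^k(A), where C^k(A) = {m^k(x₁,…,x_{2^k}) : x_i ∈ A}. -/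
open Metric Set Filter Topology MeasureTheory
open scoped ENNReal

variable {X : Type*} [MetricSpace X] [Midpoints X]

/-- Iterated midpoint maps: m^0 is the identity on points, and
m^{k+1}(x₁,…,x_{2^{k+1}}) = m¹(m^k(first half), m^k(second half)). -/
noncomputable def itMid : (k : ℕ) → (Fin (2 ^ k) → X) → X
  | 0, f => f ⟨0, by norm_num⟩
  | (k + 1), f =>
      Midpoints.mid
        (itMid k (fun i => f ⟨i.1, by
          have h1 := i.2
          have h2 : (2:ℕ) ^ k ≤ 2 ^ (k + 1) := Nat.pow_le_pow_right (by norm_num) (Nat.le_succ k)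
          omega⟩))
        (itMid k (fun i => f ⟨2 ^ k + i.1, by
          have h1 := i.2
          have h2 : (2:ℕ) ^ (k + 1) = 2 ^ k + 2 ^ k := by ring
          omega⟩))

/-- C^k(A): the set of iterated midpoints of 2^k points of A. -/
def CkSet (A : Set X) (k : ℕ) : Set X :=
  {z : X | ∃ f : Fin (2 ^ k) → X, (∀ i, f i ∈ A) ∧ itMid k f = z}

lemma mid_self (x : X) : Midpoints.mid x x = x := by
  have h := Midpoints.dist_left x x
  rw [dist_self] at h
  norm_num at h
  exact h.symm

lemma itMid_mem_of_MConvex {C : Set X} (hC : MConvex C) :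
    ∀ (k : ℕ) (f : Fin (2 ^ k) → X), (∀ i, f i ∈ C) → itMid k f ∈ C := by
  intro k
  induction k with
  | zero => intro f hf; exact hf _
  | succ k ih =>
      intro f hf
      exact hC _ (ih _ fun i => hf _) _ (ih _ fun i => hf _)

lemma itMid_succ_pair (k : ℕ) (f g : Fin (2 ^ k) → X) :
    itMid (k + 1) (fun i : Fin (2 ^ (k + 1)) =>
      if h : i.1 < 2 ^ k then f ⟨i.1, h⟩
      else g ⟨i.1 - 2 ^ k, by have h1 := i.2; simp only [pow_succ] at h1; omega⟩)
    = Midpoints.mid (itMid k f) (itMid k g) := by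
  show Midpoints.mid _ _ = _
  congr 1
  · congr 1
    funext i
    simp [i.2]
  · congr 1
    funext i
    have hn : ¬ (2 ^ k + i.1 < 2 ^ k) := by omega
    simp only [hn, dif_neg, not_false_iff]
    congr 1
    exact Fin.ext (by simp)

lemma mid_mem_Ck (A : Set X) (k : ℕ) {x y : X} (hx : x ∈ CkSet A k) (hy : y ∈ CkSet A k) :
    Midpoints.mid x y ∈ CkSet A (k + 1) := by
  rcases hx with ⟨f, hf, rfl⟩
  rcases hy with ⟨g, hg, rfl⟩
  refine ⟨fun i : Fin (2 ^ (k + 1)) =>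
      if h : i.1 < 2 ^ k then f ⟨i.1, h⟩
      else g ⟨i.1 - 2 ^ k, by have h1 := i.2; simp only [pow_succ] at h1; omega⟩,
    ?_, itMid_succ_pair k f g⟩
  intro i
  by_cases h : i.1 < 2 ^ k
  · simp only [h, dif_pos]; exact hf _
  · simp only [h, dif_neg, not_false_iff]; exact hg _

lemma CkSet_mono (A : Set X) {k l : ℕ} (h : k ≤ l) : CkSet A k ⊆ CkSet A l := by
  induction l with
  | zero => simp [Nat.le_zero.mp h]
  | succ l ih =>
      rcases Nat.lt_or_ge k (l + 1) with h' | h'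
      · refine (ih (Nat.lt_succ_iff.mp h')).trans ?_
        intro z hz
        have := mid_mem_Ck A l hz hz
        rwa [mid_self] at this
      · have : k = l + 1 := le_antisymm h h'
        subst this; exact fun _ hx => hx

lemma mid_mem_union (A : Set X) {x y : X} (hx : x ∈ ⋃ k : ℕ, CkSet A k)
    (hy : y ∈ ⋃ k : ℕ, CkSet A k) : Midpoints.mid x y ∈ ⋃ k : ℕ, CkSet A k := by
  rcases mem_iUnion.mp hx with ⟨k, hk⟩
  rcases mem_iUnion.mp hy with ⟨l, hl⟩
  exact mem_iUnion.mpr ⟨max k l + 1,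
    mid_mem_Ck A _ (CkSet_mono A (le_max_left k l) hk) (CkSet_mono A (le_max_right k l) hl)⟩

/-- In a complete CAT(0) space, the closed convex hull of A equals the closure
of ⋃ₖ C^k(A), the sets of iterated midpoints of points of A. -/
theorem stmt11 [CompleteSpace X] (A : Set X) :
    cchull A = closure (⋃ k : ℕ, CkSet A k) := by
  apply le_antisymm
  · apply sInter_subset_of_mem
    refine ⟨?_, isClosed_closure, ?_⟩
    · intro a ha
      apply subset_closure
      exact mem_iUnion.mpr ⟨0, fun _ => a, fun _ => ha, rfl⟩
    · intro x hx y hy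
      rw [Metric.mem_closure_iff] at hx hy ⊢
      intro ε hε
      rcases hx ε hε with ⟨x', hx', hdx⟩
      rcases hy ε hε with ⟨y', hy', hdy⟩
      refine ⟨Midpoints.mid x' y', mid_mem_union A hx' hy', ?_⟩
      calc dist (Midpoints.mid x y) (Midpoints.mid x' y')
          ≤ (dist x x' + dist y y') / 2 := Midpoints.mid_lipschitz x y x' y'
        _ < (ε + ε) / 2 := by linarith
        _ = ε := by ring
  · intro z hz C hC
    rcases hC with ⟨hAC, hCcl, hCconv⟩
    have hsub : (⋃ k : ℕ, CkSet A k) ⊆ C := by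
      intro w hw
      rcases mem_iUnion.mp hw with ⟨k, f, hf, rfl⟩
      exact itMid_mem_of_MConvex hCconv k f fun i => hAC (hf i)
    exact hCcl.closure_subset ((closure_mono hsub).trans (by rw [hCcl.closure_eq]) hz)
end
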